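/- Let n ∈ ℕ and p ∈ (1, ∞). If there exists a positive constant C such that ‖S(f, Δf/(2n+4))‖_{L^p(ℝⁿ)} ≤ C‖Δf‖_{L^p(ℝⁿ)} for every Schwartz function f on ℝⁿ, then p ≥ 2n/(n+4). In particular, for n ≥ 4 and p ∈ (1, 2n/(4+n)), the characterization of W^{2,p}(ℝⁿ) by the area function S(f,g) fails. -/

import Mathlib

open MeasureTheory Metric Complex
open scoped ENNReal FourierTransform RealInnerProductSpace

noncomputable section

/-- The average of `f` over the ball of center `x` and radius `t`:
`B_t f(x) = ⨍_{B(x,t)} f(y) dy`. -/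
def ballAvg {n : ℕ} (f : EuclideanSpace ℝ (Fin n) → ℂ) (t : ℝ)
    (x : EuclideanSpace ℝ (Fin n)) : ℂ :=
  ⨍ y in Metric.ball x t, f y

/-- The `L^p`-type norm `(∫ (F x)^p dμ)^{1/p}` of an `ℝ≥0∞`-valued function. -/
def lpNormE {α : Type*} [MeasurableSpace α] (F : α → ℝ≥0∞) (p : ℝ) (μ : Measure α) : ℝ≥0∞ :=
  (∫⁻ x, F x ^ p ∂μ) ^ (1 / p)

/-- The second order Lusin area function
`S(f,g)(x) = (∫₀^∞ ∫_{B(x,t)} |(B_t f(y) − f(y))/t² − B_t g(y)|² dy dt/t^{n+1})^{1/2}`. -/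
def lusinS2 (n : ℕ) (f g : EuclideanSpace ℝ (Fin n) → ℂ)
    (x : EuclideanSpace ℝ (Fin n)) : ℝ≥0∞ :=
  (∫⁻ t in Set.Ioi (0 : ℝ),
      (∫⁻ y in Metric.ball x t,
        (‖(ballAvg f t y - f y) / (t : ℂ) ^ 2 - ballAvg g t y‖₊ : ℝ≥0∞) ^ 2)
        / ENNReal.ofReal (t ^ (n + 1))) ^ (1 / 2 : ℝ)

/-- The fractional Lusin area function
`S_α(f)(x) = (∫₀^∞ ∫_{B(x,t)} |(B_t f(y) − f(y))/t^α|² dy dt/t^{n+1})^{1/2}`. -/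
def lusinSa (n : ℕ) (α : ℝ) (f : EuclideanSpace ℝ (Fin n) → ℂ)
    (x : EuclideanSpace ℝ (Fin n)) : ℝ≥0∞ :=
  (∫⁻ t in Set.Ioi (0 : ℝ),
      (∫⁻ y in Metric.ball x t,
        (‖(ballAvg f t y - f y) / ((t ^ α : ℝ) : ℂ)‖₊ : ℝ≥0∞) ^ 2)
        / ENNReal.ofReal (t ^ (n + 1))) ^ (1 / 2 : ℝ)

/-- The classical Laplacian `Δφ = Σᵢ ∂²φ/∂xᵢ²`. -/
def lap {n : ℕ} (φ : EuclideanSpace ℝ (Fin n) → ℂ) (x : EuclideanSpace ℝ (Fin n)) : ℂ :=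
  ∑ i : Fin n,
    fderiv ℝ (fun y => fderiv ℝ φ y (EuclideanSpace.single i 1)) x (EuclideanSpace.single i 1)

/-- `g` is the distributional Laplacian of `f`, i.e. `∫ f Δφ = ∫ g φ`
for every Schwartz test function `φ`. -/
def HasDistribLap {n : ℕ} (f g : EuclideanSpace ℝ (Fin n) → ℂ) : Prop :=
  ∀ φ : SchwartzMap (EuclideanSpace ℝ (Fin n)) ℂ,
    ∫ x, f x * lap (⇑φ) x = ∫ x, g x * φ x

/-- The fractional Laplacian `(−Δ)^{α/2}` of a (Schwartz class) function, defined via the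
Fourier transform as the Fourier multiplier with symbol `|ξ|^α` (in the `e^{-ix·ξ}`
normalization; equivalently `(2π|ξ|)^α` in the Mathlib normalization of `𝓕`). -/
def fracLapFun {n : ℕ} (α : ℝ) (φ : EuclideanSpace ℝ (Fin n) → ℂ) :
    EuclideanSpace ℝ (Fin n) → ℂ :=
  𝓕⁻ (fun ξ => (((2 * Real.pi * ‖ξ‖) ^ α : ℝ) : ℂ) * 𝓕 φ ξ)

/-- `g = (−Δ)^{α/2} f` in the sense of tempered distributions:
`∫ f · (−Δ)^{α/2}φ = ∫ g · φ` for every Schwartz test function `φ`. -/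
def HasFracLap {n : ℕ} (α : ℝ) (f g : EuclideanSpace ℝ (Fin n) → ℂ) : Prop :=
  ∀ φ : SchwartzMap (EuclideanSpace ℝ (Fin n)) ℂ,
    ∫ x, f x * fracLapFun α (⇑φ) x = ∫ x, g x * φ x

/-- The Fourier transform of the normalized indicator of the unit ball,
`χ̂(ξ) = (1/|B(0,1)|) ∫_{B(0,1)} e^{−i x·ξ} dx`. -/
def chiHat (n : ℕ) (ξ : EuclideanSpace ℝ (Fin n)) : ℂ :=
  ⨍ x in Metric.ball (0 : EuclideanSpace ℝ (Fin n)) 1,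
    Complex.exp (-Complex.I * ((inner ℝ x ξ : ℝ) : ℂ))

/-- The area function `S(F)` of a measurable function on `ℝⁿ × (0,∞)`. -/
def sqS (n : ℕ) (F : EuclideanSpace ℝ (Fin n) × ℝ → ℝ)
    (x : EuclideanSpace ℝ (Fin n)) : ℝ≥0∞ :=
  (∫⁻ t in Set.Ioi (0 : ℝ),
      (∫⁻ y in Metric.ball x t, (‖F (y, t)‖₊ : ℝ≥0∞) ^ 2)
        / ENNReal.ofReal (t ^ (n + 1))) ^ (1 / 2 : ℝ)

/-- The Littlewood–Paley `g`-function `G(F)` of a measurable function on `ℝⁿ × (0,∞)`. -/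
def sqG (n : ℕ) (F : EuclideanSpace ℝ (Fin n) × ℝ → ℝ)
    (x : EuclideanSpace ℝ (Fin n)) : ℝ≥0∞ :=
  (∫⁻ t in Set.Ioi (0 : ℝ), (‖F (x, t)‖₊ : ℝ≥0∞) ^ 2 / ENNReal.ofReal t) ^ (1 / 2 : ℝ)

/-- The Littlewood–Paley `g*_λ`-function `G*_λ(F)` of a measurable function on
`ℝⁿ × (0,∞)`. -/
def sqGstar (n : ℕ) (lam : ℝ) (F : EuclideanSpace ℝ (Fin n) × ℝ → ℝ)
    (x : EuclideanSpace ℝ (Fin n)) : ℝ≥0∞ :=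
  (∫⁻ t in Set.Ioi (0 : ℝ),
      (∫⁻ y, (‖F (y, t)‖₊ : ℝ≥0∞) ^ 2
          * ENNReal.ofReal ((t / (t + dist x y)) ^ (lam * n)))
        / ENNReal.ofReal (t ^ (n + 1))) ^ (1 / 2 : ℝ)

/-- The fractional Littlewood–Paley function `g*_{α,λ}(f)`. -/
def gstarA (n : ℕ) (α lam : ℝ) (f : EuclideanSpace ℝ (Fin n) → ℂ)
    (x : EuclideanSpace ℝ (Fin n)) : ℝ≥0∞ :=
  (∫⁻ t in Set.Ioi (0 : ℝ),
      (∫⁻ y, (‖(ballAvg f t y - f y) / ((t ^ α : ℝ) : ℂ)‖₊ : ℝ≥0∞) ^ 2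
          * ENNReal.ofReal ((t / (t + dist x y)) ^ (lam * n)))
        / ENNReal.ofReal (t ^ (n + 1))) ^ (1 / 2 : ℝ)

/-- The second order Littlewood–Paley function `g*_λ(f,g)`. -/
def gstar2 (n : ℕ) (lam : ℝ) (f g : EuclideanSpace ℝ (Fin n) → ℂ)
    (x : EuclideanSpace ℝ (Fin n)) : ℝ≥0∞ :=
  (∫⁻ t in Set.Ioi (0 : ℝ),
      (∫⁻ y, (‖(ballAvg f t y - f y) / (t : ℂ) ^ 2 - ballAvg g t y‖₊ : ℝ≥0∞) ^ 2
          * ENNReal.ofReal ((t / (t + dist x y)) ^ (lam * n)))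
        / ENNReal.ofReal (t ^ (n + 1))) ^ (1 / 2 : ℝ)

/-- `𝒦̂(ξ) = (χ̂(ξ) − 1)/|ξ|² + χ̂(ξ)/(2n+4)`. -/
def KHat (n : ℕ) (ξ : EuclideanSpace ℝ (Fin n)) : ℂ :=
  (chiHat n ξ - 1) / ((‖ξ‖ ^ 2 : ℝ) : ℂ) + chiHat n ξ / (2 * (n : ℂ) + 4)

/-- A radial function on `ℝⁿ`. -/
def IsRadial {n : ℕ} (φ : EuclideanSpace ℝ (Fin n) → ℂ) : Prop :=
  ∀ x y : EuclideanSpace ℝ (Fin n), ‖x‖ = ‖y‖ → φ x = φ y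

/-- `F_{j,k,t}`: the inverse Fourier transform of
`ξ ↦ φ̂(2^{−j−k}ξ)·((χ̂(tξ) − 1)/(t|ξ|)^α)·f̂(ξ)`. -/
def Fjkt (n : ℕ) (α : ℝ) (φ f : EuclideanSpace ℝ (Fin n) → ℂ) (j k : ℤ) (t : ℝ) :
    EuclideanSpace ℝ (Fin n) → ℂ :=
  𝓕⁻ (fun ξ => 𝓕 φ (((2 : ℝ) ^ (-(j + k)) : ℝ) • ξ)
      * ((chiHat n (t • ξ) - 1) / ((((t * ‖ξ‖) ^ α : ℝ)) : ℂ)) * 𝓕 f ξ)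

/-- The square function
`T_j(f)(x) = (Σ_{k∈ℤ} ∫_{2^{−k}}^{2^{−k+1}} ⨍_{B(0,2^{−k+1})} |F_{j,k,t}(x+y)|² dy dt/t)^{1/2}`. -/
def Tj (n : ℕ) (α : ℝ) (φ f : EuclideanSpace ℝ (Fin n) → ℂ) (j : ℤ)
    (x : EuclideanSpace ℝ (Fin n)) : ℝ≥0∞ :=
  (∑' k : ℤ, ∫⁻ t in Set.Ioc ((2 : ℝ) ^ (-k)) ((2 : ℝ) ^ (-k + 1)),
      ((∫⁻ y in Metric.ball (0 : EuclideanSpace ℝ (Fin n)) ((2 : ℝ) ^ (-k + 1)),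
          (‖Fjkt n α φ f j k t (x + y)‖₊ : ℝ≥0∞) ^ 2)
        / volume (Metric.ball (0 : EuclideanSpace ℝ (Fin n)) ((2 : ℝ) ^ (-k + 1))))
        / ENNReal.ofReal t) ^ (1 / 2 : ℝ)

/-- `G_{j,k,t}`: the inverse Fourier transform of
`ξ ↦ φ̂(2^{−j−k}ξ)·[(χ̂(tξ) − 1)/(t|ξ|)² + χ̂(tξ)/(2n+4)]·f̂(ξ)`. -/
def Gjkt (n : ℕ) (φ f : EuclideanSpace ℝ (Fin n) → ℂ) (j k : ℤ) (t : ℝ) :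
    EuclideanSpace ℝ (Fin n) → ℂ :=
  𝓕⁻ (fun ξ => 𝓕 φ (((2 : ℝ) ^ (-(j + k)) : ℝ) • ξ)
      * ((chiHat n (t • ξ) - 1) / ((((t * ‖ξ‖) ^ 2 : ℝ)) : ℂ)
          + chiHat n (t • ξ) / (2 * (n : ℂ) + 4)) * 𝓕 f ξ)

/-- The square function
`𝒯_j(f)(x) = (Σ_{k∈ℤ} ∫_{2^{−k}}^{2^{−k+1}} ⨍_{B(0,2^{−k+1})} |G_{j,k,t}(x+y)|² dy dt/t)^{1/2}`. -/
def Tcj (n : ℕ) (φ f : EuclideanSpace ℝ (Fin n) → ℂ) (j : ℤ)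
    (x : EuclideanSpace ℝ (Fin n)) : ℝ≥0∞ :=
  (∑' k : ℤ, ∫⁻ t in Set.Ioc ((2 : ℝ) ^ (-k)) ((2 : ℝ) ^ (-k + 1)),
      ((∫⁻ y in Metric.ball (0 : EuclideanSpace ℝ (Fin n)) ((2 : ℝ) ^ (-k + 1)),
          (‖Gjkt n φ f j k t (x + y)‖₊ : ℝ≥0∞) ^ 2)
        / volume (Metric.ball (0 : EuclideanSpace ℝ (Fin n)) ((2 : ℝ) ^ (-k + 1))))
        / ENNReal.ofReal t) ^ (1 / 2 : ℝ)


/-!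
Argue by contradiction with a Schwartz bump `f = 1` on `closedBall 0 (1/2)` and `g = Δf/(2n+4)`.
The averages `B_t f`, `B_t g` of these integrable functions decay like `t⁻ⁿ`, and `n > 4` because
`1 < p < 2n/(n+4)`; so the term `-f(y)/t²` dominates the integrand of `S(f,g)` for large `t` and
`y` near the origin. Since `B(x,t) ⊇ closedBall 0 (1/2)` for `t ∈ (2|x|, 3|x|]`, this gives
`S(f,g)(x)² ≳ |x|^{-(n+4)}` for large `|x|`, which is not in `L^{p/2}` when `(n+4)p/2 ≤ n`,
whereas `C‖Δf‖_p` is finite because `Δf` is Schwartz.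
-/

open Filter
open scoped Laplacian

theorem norm_setAverage_le_integral_norm_div {α E : Type*} [MeasurableSpace α]
    [NormedAddCommGroup E] [NormedSpace ℝ E] {μ : Measure α} {f : α → E} (hf : Integrable f μ)
    (s : Set α) : ‖⨍ x in s, f x ∂μ‖ ≤ (∫ x, ‖f x‖ ∂μ) / μ.real s := by
  rw [setAverage_eq, norm_smul, norm_inv, Real.norm_of_nonneg measureReal_nonneg,
    inv_mul_eq_div]
  gcongr
  exact (norm_integral_le_integral_norm _).trans
    (setIntegral_le_integral hf.norm (.of_forall fun _ => norm_nonneg _))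

theorem not_integrableOn_norm_rpow_neg {E : Type*} [NormedAddCommGroup E] [NormedSpace ℝ E]
    [Nontrivial E] [FiniteDimensional ℝ E] [MeasurableSpace E] [BorelSpace E]
    (μ : Measure E) [μ.IsAddHaarMeasure] {s : ℝ} (hs : s ≤ Module.finrank ℝ E) {R : ℝ}
    (hR : 0 < R) : ¬ IntegrableOn (fun x : E => ‖x‖ ^ (-s)) {x | R < ‖x‖} μ := by
  intro h
  have hd : 1 ≤ Module.finrank ℝ E := Module.finrank_pos
  have hrad : Integrable (fun x : E => (Set.Ioi R).indicator (fun r => r ^ (-s)) ‖x‖) μ := by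
    rw [← integrable_indicator_iff (measurableSet_lt measurable_const measurable_norm)] at h
    refine h.congr (.of_forall fun x => ?_)
    by_cases hx : R < ‖x‖ <;> simp [Set.indicator, hx]
  rw [integrable_fun_norm_addHaar] at hrad
  have hIoi : IntegrableOn (fun y : ℝ => y ^ ((Module.finrank ℝ E : ℝ) - 1 - s)) (Set.Ioi R) := by
    refine (hrad.mono_set (Set.Ioi_subset_Ioi hR.le)).congr_fun (fun y (hy : R < y) => ?_)
      measurableSet_Ioi
    simp only [Set.indicator_of_mem (show y ∈ Set.Ioi R from hy), smul_eq_mul]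
    rw [← Real.rpow_natCast, Nat.cast_sub hd, ← Real.rpow_add (hR.trans hy)]
    ring_nf
  have := (integrableOn_Ioi_rpow_iff hR).1 hIoi
  linarith

theorem exists_schwartzMap_eq_one_on_closedBall {E : Type*} [NormedAddCommGroup E]
    [InnerProductSpace ℝ E] [FiniteDimensional ℝ E] {r : ℝ} (hr : 0 < r) :
    ∃ f : SchwartzMap E ℂ, ∀ y ∈ closedBall (0 : E) r, f y = 1 := by
  let φ : ContDiffBump (0 : E) := ⟨r, r + 1, hr, by linarith⟩
  have hφ : HasCompactSupport fun x => (φ x : ℂ) :=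
    φ.hasCompactSupport.comp_left Complex.ofReal_zero
  refine ⟨hφ.toSchwartzMap (ofRealCLM.contDiff.comp φ.contDiff), fun y hy => ?_⟩
  change ((φ y : ℝ) : ℂ) = 1
  rw [φ.one_of_mem_closedBall hy, Complex.ofReal_one]

theorem inv_two_mul_sq_le_norm_sub {a b : ℂ} {t : ℝ} (ht : 0 < t) (ha : ‖a‖ ≤ 1 / 4)
    (hb : ‖b‖ ≤ (4 * t ^ 2)⁻¹) : (2 * t ^ 2)⁻¹ ≤ ‖(a - 1) / (t : ℂ) ^ 2 - b‖ := by
  have htc : (t : ℂ) ≠ 0 := ofReal_ne_zero.mpr ht.ne'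
  have hsplit : (a - 1) / (t : ℂ) ^ 2 - b = -((1 - (a - t ^ 2 * b)) / (t : ℂ) ^ 2) := by
    field_simp
    ring
  have htb : ‖(t : ℂ) ^ 2 * b‖ ≤ 1 / 4 := by
    rw [norm_mul, norm_pow, norm_real, Real.norm_of_nonneg ht.le]
    calc t ^ 2 * ‖b‖ ≤ t ^ 2 * (4 * t ^ 2)⁻¹ := by gcongr
      _ = 1 / 4 := by field_simp
  have hnum : 1 / 2 ≤ ‖1 - (a - t ^ 2 * b)‖ := by
    have h1 := norm_sub_norm_le (1 : ℂ) (a - t ^ 2 * b)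
    have h2 := norm_sub_le a ((t : ℂ) ^ 2 * b)
    rw [norm_one] at h1
    linarith
  rw [hsplit, norm_neg, norm_div, norm_pow, norm_real, Real.norm_of_nonneg ht.le,
    le_div_iff₀ (by positivity)]
  calc (2 * t ^ 2)⁻¹ * t ^ 2 = 1 / 2 := by field_simp
    _ ≤ _ := hnum

section AreaFunction

variable {n : ℕ} {f g : EuclideanSpace ℝ (Fin n) → ℂ}

def lusinS2Integrand (n : ℕ) (f g : EuclideanSpace ℝ (Fin n) → ℂ)
    (x : EuclideanSpace ℝ (Fin n)) (t : ℝ) : ℝ≥0∞ :=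
  (∫⁻ y in ball x t, (‖(ballAvg f t y - f y) / (t : ℂ) ^ 2 - ballAvg g t y‖₊ : ℝ≥0∞) ^ 2)
    / ENNReal.ofReal (t ^ (n + 1))

theorem lusinS2_rpow_two (x : EuclideanSpace ℝ (Fin n)) :
    lusinS2 n f g x ^ (2 : ℝ) = ∫⁻ t in Set.Ioi 0, lusinS2Integrand n f g x t := by
  rw [lusinS2, ← ENNReal.rpow_mul, one_div, inv_mul_cancel₀ two_ne_zero, ENNReal.rpow_one]
  rfl

theorem lap_eq_laplacian (F : SchwartzMap (EuclideanSpace ℝ (Fin n)) ℂ) :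
    lap ⇑F = ⇑(Δ F : SchwartzMap (EuclideanSpace ℝ (Fin n)) ℂ) := by
  ext x
  rw [SchwartzMap.laplacian_eq_sum (EuclideanSpace.basisFun (Fin n) ℝ)]
  simp only [lap, sum_apply, SchwartzMap.lineDerivOp_apply_eq_fderiv,
    EuclideanSpace.basisFun_apply]
  rfl

theorem norm_ballAvg_le (hf : Integrable f) {t : ℝ} (ht : 0 < t) (y : EuclideanSpace ℝ (Fin n)) :
    ‖ballAvg f t y‖ ≤
      (∫ z, ‖f z‖) / volume.real (ball (0 : EuclideanSpace ℝ (Fin n)) 1) / t ^ n := by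
  have hvol : volume.real (ball y t) =
      t ^ n * volume.real (ball (0 : EuclideanSpace ℝ (Fin n)) 1) := by
    rw [measureReal_def, measureReal_def, Measure.addHaar_ball_of_pos _ _ ht, ENNReal.toReal_mul,
      ENNReal.toReal_ofReal (by positivity), finrank_euclideanSpace_fin]
  rw [div_div, mul_comm, ← hvol]
  exact norm_setAverage_le_integral_norm_div hf _

theorem eventually_norm_ballAvg_le (hn : 2 < n) (hf : Integrable f) :
    ∀ᶠ t in atTop, ∀ y, ‖ballAvg f t y‖ ≤ (4 * t ^ 2)⁻¹ := by
  set M := (∫ z, ‖f z‖) / volume.real (ball (0 : EuclideanSpace ℝ (Fin n)) 1)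
  have hM : 0 ≤ M := div_nonneg (integral_nonneg fun _ => norm_nonneg _) measureReal_nonneg
  filter_upwards [eventually_ge_atTop 1, eventually_ge_atTop (4 * M)] with t ht1 htM y
  calc ‖ballAvg f t y‖ ≤ M / t ^ n := norm_ballAvg_le hf (one_pos.trans_le ht1) y
    _ ≤ M / t ^ 3 := by gcongr; exact hn
    _ ≤ (t / 4) / t ^ 3 := by gcongr; linarith
    _ = (4 * t ^ 2)⁻¹ := by field_simp

theorem eventually_inv_two_mul_sq_le_norm (hn : 2 < n) (hf : Integrable f) (hg : Integrable g)
    {s : Set (EuclideanSpace ℝ (Fin n))} (hf1 : ∀ y ∈ s, f y = 1) :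
    ∀ᶠ t in atTop, ∀ y ∈ s,
      (2 * t ^ 2)⁻¹ ≤ ‖(ballAvg f t y - f y) / (t : ℂ) ^ 2 - ballAvg g t y‖ := by
  filter_upwards [eventually_norm_ballAvg_le hn hf, eventually_norm_ballAvg_le hn hg,
    eventually_ge_atTop 1] with t hft hgt ht1 y hy
  have ha : ‖ballAvg f t y‖ ≤ 1 / 4 := (hft y).trans (by rw [one_div]; gcongr; nlinarith)
  rw [hf1 y hy]
  exact inv_two_mul_sq_le_norm_sub (one_pos.trans_le ht1) ha (hgt y)

theorem le_lusinS2Integrand {r t : ℝ} {x : EuclideanSpace ℝ (Fin n)} (ht : 0 < t)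
    (hxt : ‖x‖ + r < t)
    (hlow : ∀ y ∈ closedBall (0 : EuclideanSpace ℝ (Fin n)) r,
      (2 * t ^ 2)⁻¹ ≤ ‖(ballAvg f t y - f y) / (t : ℂ) ^ 2 - ballAvg g t y‖) :
    volume (closedBall (0 : EuclideanSpace ℝ (Fin n)) r) * ENNReal.ofReal (4 * t ^ (n + 5))⁻¹ ≤
      lusinS2Integrand n f g x t := by
  have hsub : closedBall (0 : EuclideanSpace ℝ (Fin n)) r ⊆ ball x t := fun y hy => by
    rw [mem_closedBall_zero_iff] at hy
    rw [mem_ball]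
    linarith [dist_le_norm_add_norm y x]
  rw [lusinS2Integrand, ENNReal.le_div_iff_mul_le (by simp [ht]) (by simp)]
  calc volume (closedBall (0 : EuclideanSpace ℝ (Fin n)) r) * ENNReal.ofReal (4 * t ^ (n + 5))⁻¹
        * ENNReal.ofReal (t ^ (n + 1))
      = ∫⁻ _ in closedBall (0 : EuclideanSpace ℝ (Fin n)) r,
          ENNReal.ofReal (2 * t ^ 2)⁻¹ ^ 2 := by
        rw [setLIntegral_const, mul_assoc, mul_comm, ← ENNReal.ofReal_mul (by positivity),
          ← ENNReal.ofReal_pow (by positivity)]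
        congr 2
        field_simp
        ring
    _ ≤ ∫⁻ y in closedBall (0 : EuclideanSpace ℝ (Fin n)) r,
          (‖(ballAvg f t y - f y) / (t : ℂ) ^ 2 - ballAvg g t y‖₊ : ℝ≥0∞) ^ 2 := by
        refine setLIntegral_mono' measurableSet_closedBall fun y hy => ?_
        rw [← enorm_eq_nnnorm, ← ofReal_norm]
        gcongr
        exact hlow y hy
    _ ≤ _ := lintegral_mono_set hsub

theorem exists_le_lusinS2_rpow_two {r : ℝ} (hr : 0 < r)
    (hlow : ∀ᶠ t in atTop, ∀ y ∈ closedBall (0 : EuclideanSpace ℝ (Fin n)) r,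
      (2 * t ^ 2)⁻¹ ≤ ‖(ballAvg f t y - f y) / (t : ℂ) ^ 2 - ballAvg g t y‖) :
    ∃ c > 0, ∃ R > 0, ∀ x : EuclideanSpace ℝ (Fin n), R < ‖x‖ →
      ENNReal.ofReal (c * ‖x‖ ^ (-(n + 4 : ℝ))) ≤ lusinS2 n f g x ^ (2 : ℝ) := by
  obtain ⟨T, hT⟩ := eventually_atTop.1 hlow
  set w := volume (closedBall (0 : EuclideanSpace ℝ (Fin n)) r)
  have hwtop : w ≠ ⊤ := measure_closedBall_lt_top.ne
  have hw : 0 < w.toReal := ENNReal.toReal_pos (measure_closedBall_pos _ _ hr).ne' hwtop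
  refine ⟨w.toReal / (4 * 3 ^ (n + 5)), by positivity, max T r, lt_max_of_lt_right hr,
    fun x hx => ?_⟩
  set ρ := ‖x‖
  have hρT : T < ρ := (le_max_left T r).trans_lt hx
  have hρr : r < ρ := (le_max_right T r).trans_lt hx
  have hρ : 0 < ρ := hr.trans hρr
  have hshell : ∀ t ∈ Set.Ioc (2 * ρ) (3 * ρ),
      w * ENNReal.ofReal (4 * (3 * ρ) ^ (n + 5))⁻¹ ≤ lusinS2Integrand n f g x t :=
    fun t ⟨ht, ht'⟩ => by
      have ht0 : 0 < t := by linarith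
      refine le_trans ?_ (le_lusinS2Integrand ht0 (by linarith) (hT t (by linarith)))
      gcongr
  have hc : w.toReal / (4 * 3 ^ (n + 5)) * ρ ^ (-(n + 4 : ℝ)) =
      w.toReal * ((4 * (3 * ρ) ^ (n + 5))⁻¹ * (3 * ρ - 2 * ρ)) := by
    rw [Real.rpow_neg hρ.le, show (n + 4 : ℝ) = ((n + 4 : ℕ) : ℝ) by push_cast; ring,
      Real.rpow_natCast]
    field_simp
    ring
  rw [lusinS2_rpow_two]
  calc ENNReal.ofReal (w.toReal / (4 * 3 ^ (n + 5)) * ρ ^ (-(n + 4 : ℝ)))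
      = ∫⁻ _ in Set.Ioc (2 * ρ) (3 * ρ), w * ENNReal.ofReal (4 * (3 * ρ) ^ (n + 5))⁻¹ := by
        rw [setLIntegral_const, Real.volume_Ioc, hc, ENNReal.ofReal_mul hw.le,
          ENNReal.ofReal_toReal hwtop, ENNReal.ofReal_mul (by positivity), mul_assoc]
    _ ≤ ∫⁻ t in Set.Ioc (2 * ρ) (3 * ρ), lusinS2Integrand n f g x t :=
        setLIntegral_mono' measurableSet_Ioc hshell
    _ ≤ _ := lintegral_mono_set fun t ht => Set.mem_Ioi.2 (by linarith [ht.1])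

theorem lintegral_lusinS2_rpow_eq_top {r : ℝ} (hr : 0 < r)
    (hlow : ∀ᶠ t in atTop, ∀ y ∈ closedBall (0 : EuclideanSpace ℝ (Fin n)) r,
      (2 * t ^ 2)⁻¹ ≤ ‖(ballAvg f t y - f y) / (t : ℂ) ^ 2 - ballAvg g t y‖)
    {p : ℝ} (hp : 0 < p) (hpn : (n + 4) * p ≤ 2 * n) :
    ∫⁻ x, lusinS2 n f g x ^ p = ⊤ := by
  obtain ⟨c, hc, R, hR, hS⟩ := exists_le_lusinS2_rpow_two hr hlow
  have : Nonempty (Fin n) := ⟨⟨0, by exact_mod_cast (show (0 : ℝ) < n by nlinarith)⟩⟩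
  set s : ℝ := (n + 4) * (p / 2)
  have hs : s ≤ Module.finrank ℝ (EuclideanSpace ℝ (Fin n)) := by
    rw [finrank_euclideanSpace_fin]; simp only [s]; linarith
  have htop : ∫⁻ x in {x : EuclideanSpace ℝ (Fin n) | R < ‖x‖}, ‖‖x‖ ^ (-s)‖ₑ = ⊤ := by
    by_contra hfin
    exact not_integrableOn_norm_rpow_neg volume hs hR
      ⟨(measurable_norm.pow_const _).aestronglyMeasurable, lt_top_iff_ne_top.2 hfin⟩
  refine eq_top_iff.2 ?_
  calc ⊤ = ∫⁻ x in {x | R < ‖x‖}, ENNReal.ofReal (c ^ (p / 2)) * ‖‖x‖ ^ (-s)‖ₑ := by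
        rw [lintegral_const_mul' _ _ ENNReal.ofReal_ne_top, htop,
          ENNReal.mul_top (by simp [Real.rpow_pos_of_pos hc])]
    _ ≤ ∫⁻ x in {x | R < ‖x‖}, lusinS2 n f g x ^ p := by
        refine setLIntegral_mono' (measurableSet_lt measurable_const measurable_norm)
          fun x hx => ?_
        have hx0 : 0 < ‖x‖ := hR.trans hx
        calc ENNReal.ofReal (c ^ (p / 2)) * ‖‖x‖ ^ (-s)‖ₑ
            = ENNReal.ofReal (c * ‖x‖ ^ (-(n + 4 : ℝ))) ^ (p / 2) := by
              rw [← ofReal_norm, Real.norm_of_nonneg (by positivity),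
                ← ENNReal.ofReal_mul (by positivity), ENNReal.ofReal_rpow_of_nonneg
                  (by positivity) (by positivity), Real.mul_rpow hc.le (by positivity),
                ← Real.rpow_mul hx0.le]
              simp only [s]
              ring_nf
          _ ≤ (lusinS2 n f g x ^ (2 : ℝ)) ^ (p / 2) := by gcongr; exact hS x hx
          _ = lusinS2 n f g x ^ p := by rw [← ENNReal.rpow_mul]; ring_nf
    _ ≤ ∫⁻ x, lusinS2 n f g x ^ p := setLIntegral_le_lintegral _ _

end AreaFunction

theorem stmt_4_general (n : ℕ) (p : ℝ) (hp : 1 < p)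
    (h : ∃ C : ℝ, 0 < C ∧ ∀ f : SchwartzMap (EuclideanSpace ℝ (Fin n)) ℂ,
      lpNormE (lusinS2 n ⇑f (fun x => lap (⇑f) x / (2 * (n : ℂ) + 4))) p volume ≤
        ENNReal.ofReal C * eLpNorm (lap (⇑f)) (ENNReal.ofReal p) volume) :
    2 * (n : ℝ) / (n + 4) ≤ p := by
  by_contra! hlt
  obtain ⟨C, -, hbound⟩ := h
  have hpn : (n + 4) * p ≤ 2 * n := by
    rw [lt_div_iff₀ (by positivity)] at hlt; linarith
  have hn : 2 < n := by exact_mod_cast (show (2 : ℝ) < n by nlinarith)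
  obtain ⟨F, hF⟩ := exists_schwartzMap_eq_one_on_closedBall
    (E := EuclideanSpace ℝ (Fin n)) (one_half_pos (α := ℝ))
  set ΔF : SchwartzMap (EuclideanSpace ℝ (Fin n)) ℂ := Δ F
  have hlap : lap ⇑F = ⇑ΔF := lap_eq_laplacian F
  have hg : Integrable fun x => lap (⇑F) x / (2 * (n : ℂ) + 4) := by
    rw [hlap]; exact ΔF.integrable.div_const _
  have hS : lpNormE (lusinS2 n ⇑F (fun x => lap (⇑F) x / (2 * (n : ℂ) + 4))) p volume = ⊤ := by
    rw [lpNormE, lintegral_lusinS2_rpow_eq_top one_half_pos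
      (eventually_inv_two_mul_sq_le_norm hn F.integrable hg hF) (by linarith) hpn]
    exact ENNReal.top_rpow_of_pos (by positivity)
  have hfin : eLpNorm (lap ⇑F) (ENNReal.ofReal p) volume < ⊤ := by
    rw [hlap]; exact (ΔF.memLp (ENNReal.ofReal p) volume).eLpNorm_lt_top
  have hle := hbound F
  rw [hS, top_le_iff] at hle
  exact (ENNReal.mul_lt_top ENNReal.ofReal_lt_top hfin).ne hle

/-- Let `n ∈ ℕ` and `p ∈ (1,∞)`. If there is `C > 0` with
`‖S(f, Δf/(2n+4))‖_{Lᵖ} ≤ C‖Δf‖_{Lᵖ}` for every Schwartz function `f`, then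
`p ≥ 2n/(n+4)`. -/
theorem stmt_4 (n : ℕ) (hn : 0 < n) (p : ℝ) (hp : 1 < p)
    (h : ∃ C : ℝ, 0 < C ∧ ∀ f : SchwartzMap (EuclideanSpace ℝ (Fin n)) ℂ,
      lpNormE (lusinS2 n ⇑f (fun x => lap (⇑f) x / (2 * (n : ℂ) + 4))) p volume ≤
        ENNReal.ofReal C * eLpNorm (lap (⇑f)) (ENNReal.ofReal p) volume) :
    2 * (n : ℝ) / (n + 4) ≤ p :=
  stmt_4_general n p hp h
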